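/- arXiv:2111.03144 — 3 statements merged into one kernel-verified Lean document; each statement's English description precedes it below -/
import Mathlib

section
/- If the target distribution factorizes as p(θ,z) = p(θ)·∏_{i=1}^N p(z_i|θ) (conditional independence of the z_i given θ), then for any joint distribution q on (θ, z₁,…,z_N), the 'branched' distribution q^B(θ,z) = q(θ)·∏_i q(z_i|θ) built from q's marginal and single-coordinate conditionals satisfies KL(q^B || p) ≤ KL(q || p). -/
open Finset

lemma sum_pi_prod {N : ℕ} {Z : Fin N → Type*} [∀ i, Fintype (Z i)]
    (h : ∀ j, Z j → ℝ) :
    ∑ z : ∀ j, Z j, ∏ j, h j (z j) = ∏ j, ∑ zj, h j zj := by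
  rw [Finset.prod_univ_sum, Fintype.piFinset_univ]

lemma sum_pi_prod_fix {N : ℕ} {Z : Fin N → Type*} [∀ i, Fintype (Z i)]
    [∀ i, DecidableEq (Z i)]
    (h : ∀ j, Z j → ℝ) (i : Fin N) (zi : Z i) :
    ∑ z : ∀ j, Z j, (if z i = zi then ∏ j, h j (z j) else 0)
      = h i zi * ∏ j ∈ univ.erase i, ∑ zj, h j zj := by
  set h' : ∀ j, Z j → ℝ := Function.update h i (fun x => if x = zi then h i x else 0) with hh'
  have hne : ∀ j, j ≠ i → h' j = h j := fun j hj => Function.update_of_ne hj _ _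
  have hi : h' i = fun x => if x = zi then h i x else 0 := Function.update_self _ _ _
  have step : ∀ z : ∀ j, Z j,
      (if z i = zi then ∏ j, h j (z j) else 0) = ∏ j, h' j (z j) := by
    intro z
    rw [← Finset.mul_prod_erase univ (fun j => h' j (z j)) (mem_univ i)]
    have he : ∏ j ∈ univ.erase i, h' j (z j) = ∏ j ∈ univ.erase i, h j (z j) :=
      Finset.prod_congr rfl fun j hj => by rw [hne j (Finset.ne_of_mem_erase hj)]
    rw [he, hi]
    by_cases hz : z i = zi
    · simp only [hz, if_pos rfl, if_true]
      rw [← Finset.mul_prod_erase univ (fun j => h j (z j)) (mem_univ i), hz]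
    · simp [hz]
  rw [Finset.sum_congr rfl (fun z _ => step z), sum_pi_prod h',
    ← Finset.mul_prod_erase univ (fun j => ∑ zj, h' j zj) (mem_univ i)]
  have he : ∏ j ∈ univ.erase i, ∑ zj, h' j zj = ∏ j ∈ univ.erase i, ∑ zj, h j zj :=
    Finset.prod_congr rfl fun j hj => by rw [hne j (Finset.ne_of_mem_erase hj)]
  rw [he, hi]
  simp

lemma sum_weight_coord {N : ℕ} {Θ : Type*} [Fintype Θ] {Z : Fin N → Type*}
    [∀ i, Fintype (Z i)] [∀ i, DecidableEq (Z i)]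
    (w : Θ × (∀ i, Z i) → ℝ) (i : Fin N) (F : Θ → Z i → ℝ) :
    ∑ x : Θ × (∀ j, Z j), w x * F x.1 (x.2 i)
      = ∑ θ, ∑ zi, (∑ z : ∀ j, Z j, if z i = zi then w (θ, z) else 0) * F θ zi := by
  rw [Fintype.sum_prod_type]
  refine Finset.sum_congr rfl fun θ _ => ?_
  have h1 : ∀ zi : Z i, (∑ z : ∀ j, Z j, if z i = zi then w (θ, z) else 0) * F θ zi
      = ∑ z : ∀ j, Z j, if z i = zi then w (θ, z) * F θ zi else 0 := by
    intro zi
    rw [Finset.sum_mul]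
    exact Finset.sum_congr rfl fun z _ => by by_cases h : z i = zi <;> simp [h]
  rw [Finset.sum_congr rfl fun zi _ => h1 zi, Finset.sum_comm]
  exact Finset.sum_congr rfl fun z _ => by simp

/-- Branching a joint variational distribution towards a branched target cannot
increase the KL divergence. -/
theorem branch_kl_le_joint_kl {N : ℕ} {Θ : Type*} [Fintype Θ]
    {Z : Fin N → Type*} [∀ i, Fintype (Z i)] [∀ i, DecidableEq (Z i)]
    -- branched target p(θ,z) = p₀(θ) ∏ i, p_i(z_i | θ)
    (p₀ : Θ → ℝ) (pc : ∀ i : Fin N, Θ → Z i → ℝ)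
    (hp₀0 : ∀ θ, 0 ≤ p₀ θ) (hp₀1 : ∑ θ, p₀ θ = 1)
    (hpc0 : ∀ i θ zi, 0 ≤ pc i θ zi) (hpc1 : ∀ i θ, ∑ zi, pc i θ zi = 1)
    (p : Θ × (∀ i, Z i) → ℝ)
    (hp : ∀ θ z, p (θ, z) = p₀ θ * ∏ i, pc i θ (z i))
    -- joint variational distribution q
    (q : Θ × (∀ i, Z i) → ℝ)
    (hq0 : ∀ x, 0 ≤ q x) (hq1 : ∑ x, q x = 1)
    (hac : ∀ x, p x = 0 → q x = 0)
    -- θ-marginal of q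
    (qm : Θ → ℝ) (hqm : ∀ θ, qm θ = ∑ z, q (θ, z))
    -- single-coordinate conditionals of q given θ
    (qc : ∀ i : Fin N, Θ → Z i → ℝ)
    (hqc : ∀ i θ zi, qc i θ zi = (∑ z : ∀ j, Z j, if z i = zi then q (θ, z) else 0) / qm θ)
    -- branched distribution q^B
    (qB : Θ × (∀ i, Z i) → ℝ)
    (hqB : ∀ θ z, qB (θ, z) = qm θ * ∏ i, qc i θ (z i)) :
    ∑ x, qB x * Real.log (qB x / p x) ≤ ∑ x, q x * Real.log (q x / p x) := by
  have hqm0 : ∀ θ, 0 ≤ qm θ := fun θ => (hqm θ) ▸ Finset.sum_nonneg fun z _ => hq0 _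
  have hqz0 : ∀ θ, qm θ = 0 → ∀ z, q (θ, z) = 0 := by
    intro θ h z
    exact (Finset.sum_eq_zero_iff_of_nonneg (fun z _ => hq0 (θ, z))).1 ((hqm θ).symm.trans h) z (mem_univ z)
  have hqc0 : ∀ i θ zi, 0 ≤ qc i θ zi := by
    intro i θ zi
    rw [hqc]
    refine div_nonneg (Finset.sum_nonneg fun z _ => ?_) (hqm0 θ)
    split_ifs; exacts [hq0 _, le_rfl]
  have hqB0 : ∀ x, 0 ≤ qB x := by
    rintro ⟨θ, z⟩
    rw [hqB]
    exact mul_nonneg (hqm0 θ) (Finset.prod_nonneg fun i _ => hqc0 i θ (z i))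
  have hfib : ∀ i θ zi, qm θ ≠ 0 →
      qm θ * qc i θ zi = ∑ z : ∀ j, Z j, if z i = zi then q (θ, z) else 0 := by
    intro i θ zi h
    rw [hqc, mul_div_cancel₀ _ h]
  have hqcsum : ∀ i θ, qm θ ≠ 0 → ∑ zi, qc i θ zi = 1 := by
    intro i θ h
    have key : ∑ zi, ∑ z : ∀ j, Z j, (if z i = zi then q (θ, z) else 0) = qm θ := by
      rw [Finset.sum_comm, hqm]
      exact Finset.sum_congr rfl fun z _ => by simp
    calc ∑ zi, qc i θ zi
        = (∑ zi, ∑ z : ∀ j, Z j, (if z i = zi then q (θ, z) else 0)) / qm θ := by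
          simp only [hqc]; rw [Finset.sum_div]
      _ = 1 := by rw [key, div_self h]
  have Mθ : ∀ θ, ∑ z, qB (θ, z) = ∑ z, q (θ, z) := by
    intro θ
    by_cases h : qm θ = 0
    · simp [hqB, h, hqz0 θ h]
    · calc ∑ z, qB (θ, z) = qm θ * ∑ z : ∀ j, Z j, ∏ i, qc i θ (z i) := by
            rw [Finset.mul_sum]; exact Finset.sum_congr rfl fun z _ => hqB θ z
        _ = qm θ * ∏ i, ∑ zi, qc i θ zi := by rw [sum_pi_prod]
        _ = qm θ := by
            rw [Finset.prod_congr rfl fun i _ => hqcsum i θ h, Finset.prod_const_one, mul_one]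
        _ = ∑ z, q (θ, z) := hqm θ
  have Mpair : ∀ (i : Fin N) θ (zi : Z i),
      (∑ z : ∀ j, Z j, if z i = zi then qB (θ, z) else 0)
        = ∑ z : ∀ j, Z j, if z i = zi then q (θ, z) else 0 := by
    intro i θ zi
    by_cases h : qm θ = 0
    · simp [hqB, h, hqz0 θ h]
    · calc (∑ z : ∀ j, Z j, if z i = zi then qB (θ, z) else 0)
          = qm θ * ∑ z : ∀ j, Z j, (if z i = zi then ∏ j, qc j θ (z j) else 0) := by
            rw [Finset.mul_sum]
            refine Finset.sum_congr rfl fun z _ => ?_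
            rw [hqB, mul_ite, mul_zero]
        _ = qm θ * (qc i θ zi * ∏ j ∈ univ.erase i, ∑ zj, qc j θ zj) := by
            rw [sum_pi_prod_fix]
        _ = qm θ * qc i θ zi := by
            rw [Finset.prod_congr rfl fun j hj => hqcsum j θ h, Finset.prod_const_one, mul_one]
        _ = _ := hfib i θ zi h
  -- q is absolutely continuous wrt qB
  have hq_qB : ∀ x, q x ≠ 0 → 0 < qB x := by
    rintro ⟨θ, z⟩ hx
    have hqx : 0 < q (θ, z) := (hq0 _).lt_of_ne (Ne.symm hx)
    have hqmpos : 0 < qm θ := by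
      rw [hqm]
      exact lt_of_lt_of_le hqx (Finset.single_le_sum (fun z' _ => hq0 _) (mem_univ z))
    have hqcpos : ∀ i, 0 < qc i θ (z i) := by
      intro i
      rw [hqc]
      refine div_pos (lt_of_lt_of_le hqx ?_) hqmpos
      have h := Finset.single_le_sum
        (f := fun z' : ∀ j, Z j => if z' i = z i then q (θ, z') else 0)
        (fun z' _ => by split_ifs; exacts [hq0 _, le_rfl]) (mem_univ z)
      simpa using h
    rw [hqB]
    exact mul_pos hqmpos (Finset.prod_pos fun i _ => hqcpos i)
  -- factors of qB are nonzero where qB is nonzero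
  have hqB_parts : ∀ θ z, qB (θ, z) ≠ 0 → qm θ ≠ 0 ∧ ∀ i, qc i θ (z i) ≠ 0 := by
    intro θ z hx
    rw [hqB] at hx
    refine ⟨left_ne_zero_of_mul hx, fun i h0 => ?_⟩
    exact (right_ne_zero_of_mul hx) (Finset.prod_eq_zero (mem_univ i) h0)
  -- factors of p are nonzero where qB is nonzero
  have hp_parts : ∀ θ z, qB (θ, z) ≠ 0 → p₀ θ ≠ 0 ∧ ∀ i, pc i θ (z i) ≠ 0 := by
    intro θ z hx
    obtain ⟨hm, hc⟩ := hqB_parts θ z hx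
    constructor
    · intro h0
      apply hm
      rw [hqm]
      refine Finset.sum_eq_zero fun z' _ => hac (θ, z') ?_
      rw [hp, h0, zero_mul]
    · intro i h0
      apply hc i
      rw [hqc]
      have hz0 : ∑ z' : ∀ j, Z j, (if z' i = z i then q (θ, z') else 0) = 0 := by
        refine Finset.sum_eq_zero fun z' _ => ?_
        by_cases hz : z' i = z i
        · rw [if_pos hz]
          refine hac (θ, z') ?_
          rw [hp]
          refine mul_eq_zero_of_right _ (Finset.prod_eq_zero (mem_univ i) ?_)
          rw [hz]; exact h0
        · rw [if_neg hz]
      rw [hz0, zero_div]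
  have hqB_p : ∀ x, qB x ≠ 0 → p x ≠ 0 := by
    rintro ⟨θ, z⟩ hx
    obtain ⟨h1, h2⟩ := hp_parts θ z hx
    rw [hp]
    exact mul_ne_zero h1 (Finset.prod_ne_zero_iff.2 fun i _ => h2 i)
  -- log decompositions
  have hlogp : ∀ θ z, qB (θ, z) ≠ 0 →
      Real.log (p (θ, z)) = Real.log (p₀ θ) + ∑ i, Real.log (pc i θ (z i)) := by
    intro θ z hx
    obtain ⟨h1, h2⟩ := hp_parts θ z hx
    rw [hp, Real.log_mul h1 (Finset.prod_ne_zero_iff.2 fun i _ => h2 i),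
      Real.log_prod fun i _ => h2 i]
  have hlogqB : ∀ θ z, qB (θ, z) ≠ 0 →
      Real.log (qB (θ, z)) = Real.log (qm θ) + ∑ i, Real.log (qc i θ (z i)) := by
    intro θ z hx
    obtain ⟨h1, h2⟩ := hqB_parts θ z hx
    rw [hqB, Real.log_mul h1 (Finset.prod_ne_zero_iff.2 fun i _ => h2 i),
      Real.log_prod fun i _ => h2 i]
  -- weighted sums of branched-form functions agree for qB and q
  have main_eq : ∀ (G : Θ → ℝ) (F : ∀ i : Fin N, Θ → Z i → ℝ),
      ∑ x : Θ × (∀ j, Z j), qB x * (G x.1 + ∑ i, F i x.1 (x.2 i))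
        = ∑ x : Θ × (∀ j, Z j), q x * (G x.1 + ∑ i, F i x.1 (x.2 i)) := by
    intro G F
    have expand : ∀ w : Θ × (∀ j, Z j) → ℝ,
        ∑ x : Θ × (∀ j, Z j), w x * (G x.1 + ∑ i, F i x.1 (x.2 i))
          = (∑ x : Θ × (∀ j, Z j), w x * G x.1)
            + ∑ i, ∑ x : Θ × (∀ j, Z j), w x * F i x.1 (x.2 i) := by
      intro w
      calc ∑ x : Θ × (∀ j, Z j), w x * (G x.1 + ∑ i, F i x.1 (x.2 i))
          = ∑ x : Θ × (∀ j, Z j), (w x * G x.1 + ∑ i, w x * F i x.1 (x.2 i)) := by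
            refine Finset.sum_congr rfl fun x _ => ?_
            rw [mul_add, Finset.mul_sum]
        _ = (∑ x : Θ × (∀ j, Z j), w x * G x.1)
              + ∑ x : Θ × (∀ j, Z j), ∑ i, w x * F i x.1 (x.2 i) := Finset.sum_add_distrib
        _ = _ := by rw [Finset.sum_comm]
    have thpart : ∀ w : Θ × (∀ j, Z j) → ℝ,
        ∑ x : Θ × (∀ j, Z j), w x * G x.1 = ∑ θ, (∑ z, w (θ, z)) * G θ := by
      intro w
      rw [Fintype.sum_prod_type]
      refine Finset.sum_congr rfl fun θ _ => ?_
      rw [Finset.sum_mul]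
    rw [expand qB, expand q]
    congr 1
    · rw [thpart qB, thpart q]
      exact Finset.sum_congr rfl fun θ _ => by rw [Mθ θ]
    · refine Finset.sum_congr rfl fun i _ => ?_
      rw [sum_weight_coord qB i (F i), sum_weight_coord q i (F i)]
      exact Finset.sum_congr rfl fun θ _ =>
        Finset.sum_congr rfl fun zi _ => by rw [Mpair i θ zi]
  -- the two key equalities
  have eqP : ∑ x, qB x * Real.log (p x) = ∑ x, q x * Real.log (p x) := by
    have l : ∀ w : Θ × (∀ j, Z j) → ℝ, (∀ x, w x ≠ 0 → qB x ≠ 0) →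
        ∑ x, w x * Real.log (p x)
          = ∑ x, w x * (Real.log (p₀ x.1) + ∑ i, Real.log (pc i x.1 (x.2 i))) := by
      intro w hw
      refine Finset.sum_congr rfl fun x _ => ?_
      by_cases h : w x = 0
      · rw [h, zero_mul, zero_mul]
      · obtain ⟨θ, z⟩ := x
        rw [hlogp θ z (hw _ h)]
    rw [l qB (fun x h => h), l q (fun x h => (hq_qB x h).ne')]
    exact main_eq (fun θ => Real.log (p₀ θ)) (fun i θ zi => Real.log (pc i θ zi))
  have eqB : ∑ x, qB x * Real.log (qB x) = ∑ x, q x * Real.log (qB x) := by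
    have l : ∀ w : Θ × (∀ j, Z j) → ℝ, (∀ x, w x ≠ 0 → qB x ≠ 0) →
        ∑ x, w x * Real.log (qB x)
          = ∑ x, w x * (Real.log (qm x.1) + ∑ i, Real.log (qc i x.1 (x.2 i))) := by
      intro w hw
      refine Finset.sum_congr rfl fun x _ => ?_
      by_cases h : w x = 0
      · rw [h, zero_mul, zero_mul]
      · obtain ⟨θ, z⟩ := x
        rw [hlogqB θ z (hw _ h)]
    rw [l qB (fun x h => h), l q (fun x h => (hq_qB x h).ne')]
    exact main_eq (fun θ => Real.log (qm θ)) (fun i θ zi => Real.log (qc i θ zi))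
  -- split the KL sums
  have split_qB : ∑ x, qB x * Real.log (qB x / p x)
      = ∑ x, qB x * Real.log (qB x) - ∑ x, qB x * Real.log (p x) := by
    rw [← Finset.sum_sub_distrib]
    refine Finset.sum_congr rfl fun x _ => ?_
    by_cases h : qB x = 0
    · simp [h]
    · rw [Real.log_div h (hqB_p x h)]; ring
  have split_q : ∑ x, q x * Real.log (q x / p x)
      = ∑ x, q x * Real.log (q x) - ∑ x, q x * Real.log (p x) := by
    rw [← Finset.sum_sub_distrib]
    refine Finset.sum_congr rfl fun x _ => ?_
    by_cases h : q x = 0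
    · simp [h]
    · rw [Real.log_div h (fun hp0 => h (hac x hp0))]; ring
  -- total mass of qB
  have sumqB : ∑ x, qB x = 1 := by
    rw [Fintype.sum_prod_type, Finset.sum_congr rfl fun θ _ => Mθ θ,
      ← Fintype.sum_prod_type, hq1]
  -- Gibbs' inequality
  have gibbs : ∑ x, q x * Real.log (qB x) ≤ ∑ x, q x * Real.log (q x) := by
    have pt : ∀ x : Θ × (∀ j, Z j),
        q x - qB x ≤ q x * Real.log (q x) - q x * Real.log (qB x) := by
      intro x
      by_cases h : q x = 0
      · rw [h]; simpa using hqB0 x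
      · have hqx : 0 < q x := (hq0 x).lt_of_ne (Ne.symm h)
        have hB : 0 < qB x := hq_qB x h
        have h1 := Real.log_le_sub_one_of_pos (div_pos hB hqx)
        rw [Real.log_div hB.ne' hqx.ne'] at h1
        have h2 : qB x / q x * q x = qB x := div_mul_cancel₀ _ hqx.ne'
        nlinarith [mul_le_mul_of_nonneg_left h1 hqx.le]
    have hsum := Finset.sum_le_sum fun x (_ : x ∈ univ) => pt x
    rw [Finset.sum_sub_distrib, Finset.sum_sub_distrib, hq1, sumqB] at hsum
    linarith
  rw [split_qB, split_q, eqP, eqB]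
  linarith [gibbs]
end

section
/- Consequently, for a target p with branch structure p(θ,z) = p(θ)∏_i p(z_i|θ), the minimum KL divergence over the branch variational family {q(θ)∏_i q_i(z_i|θ)} is at most the minimum KL divergence over any joint family Q, provided for each q ∈ Q the associated branched distribution q^B lies in the branch family. -/
open Finset

set_option linter.unusedSectionVars false

variable {N : ℕ} {Θ : Type*} {Z : Fin N → Type*}

/-- KL divergence between finitely supported densities. -/
noncomputable def KL {X : Type*} [Fintype X] (q p : X → ℝ) : ℝ :=
  ∑ x, q x * Real.log (q x / p x)

/-- The θ-marginal of a joint density. -/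
noncomputable def margTheta [Fintype Θ] [∀ i, Fintype (Z i)]
    (q : Θ × (∀ i, Z i) → ℝ) (θ : Θ) : ℝ :=
  ∑ z, q (θ, z)

/-- The branched distribution built from the θ-marginal and the
single-coordinate conditionals given θ. -/
noncomputable def branch [Fintype Θ] [∀ i, Fintype (Z i)] [∀ i, DecidableEq (Z i)]
    (q : Θ × (∀ i, Z i) → ℝ) : Θ × (∀ i, Z i) → ℝ :=
  fun x =>
    margTheta q x.1 *
      ∏ i, (∑ z : ∀ j, Z j, if z i = x.2 i then q (x.1, z) else 0) / margTheta q x.1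

/-- Coordinate-i marginal given θ. -/
noncomputable def margI [Fintype Θ] [∀ i, Fintype (Z i)] [∀ i, DecidableEq (Z i)]
    (q : Θ × (∀ i, Z i) → ℝ) (i : Fin N) (θ : Θ) (zi : Z i) : ℝ :=
  ∑ z : ∀ j, Z j, if z i = zi then q (θ, z) else 0

section Aux
variable [Fintype Θ] [∀ i, Fintype (Z i)] [∀ i, DecidableEq (Z i)]

lemma branch_eq (q : Θ × (∀ i, Z i) → ℝ) (x : Θ × (∀ i, Z i)) :
    branch q x = margTheta q x.1 * ∏ i, margI q i x.1 (x.2 i) / margTheta q x.1 := rfl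

lemma margTheta_nonneg {q : Θ × (∀ i, Z i) → ℝ} (hq : ∀ x, 0 ≤ q x) (θ : Θ) :
    0 ≤ margTheta q θ := Finset.sum_nonneg fun z _ => hq (θ, z)

lemma margI_nonneg {q : Θ × (∀ i, Z i) → ℝ} (hq : ∀ x, 0 ≤ q x) (i : Fin N) (θ : Θ)
    (zi : Z i) : 0 ≤ margI q i θ zi := by
  refine Finset.sum_nonneg fun z _ => ?_
  split <;> simp [hq]

lemma le_margTheta {q : Θ × (∀ i, Z i) → ℝ} (hq : ∀ x, 0 ≤ q x) (θ : Θ) (z : ∀ i, Z i) :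
    q (θ, z) ≤ margTheta q θ :=
  Finset.single_le_sum (fun z' _ => hq (θ, z')) (Finset.mem_univ z)

lemma le_margI {q : Θ × (∀ i, Z i) → ℝ} (hq : ∀ x, 0 ≤ q x) (i : Fin N) (θ : Θ)
    (z : ∀ j, Z j) : q (θ, z) ≤ margI q i θ (z i) := by
  have := Finset.single_le_sum (f := fun z' : ∀ j, Z j => if z' i = z i then q (θ, z') else 0)
    (fun z' _ => by split <;> simp [hq]) (Finset.mem_univ z)
  simpa [margI] using this

lemma sum_margI (q : Θ × (∀ i, Z i) → ℝ) (i : Fin N) (θ : Θ) :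
    ∑ zi, margI q i θ zi = margTheta q θ := by
  unfold margI margTheta
  rw [Finset.sum_comm]
  refine Finset.sum_congr rfl fun z _ => ?_
  simp

/-- Sum over the pi type of a product of coordinate functions. -/
lemma sum_pi_prod_s2 (f : ∀ j, Z j → ℝ) :
    ∑ z : ∀ j, Z j, ∏ j, f j (z j) = ∏ j, ∑ x, f j x :=
  (Fintype.prod_sum f).symm

/-- Constrained sum over the pi type. -/
lemma sum_pi_prod_ite (i : Fin N) (zi : Z i) (f : ∀ j, Z j → ℝ) :
    ∑ z : ∀ j, Z j, (if z i = zi then ∏ j, f j (z j) else 0)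
      = f i zi * ∏ j ∈ Finset.univ.erase i, ∑ x, f j x := by
  classical
  set g : ∀ j, Z j → ℝ := Function.update f i (fun x => if x = zi then f i x else 0) with hg
  have hgprod : ∀ z : ∀ j, Z j,
      ∏ j, g j (z j) = if z i = zi then ∏ j, f j (z j) else 0 := by
    intro z
    have hsplit : ∀ h : (∀ j, Z j → ℝ), ∏ j, h j (z j)
        = h i (z i) * ∏ j ∈ Finset.univ.erase i, h j (z j) := fun h =>
      (Finset.mul_prod_erase Finset.univ (fun j => h j (z j)) (Finset.mem_univ i)).symm
    rw [hsplit g, hsplit f]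
    have hrest : ∏ j ∈ Finset.univ.erase i, g j (z j)
        = ∏ j ∈ Finset.univ.erase i, f j (z j) := by
      refine Finset.prod_congr rfl fun j hj => ?_
      rw [hg, Function.update_of_ne (Finset.ne_of_mem_erase hj)]
    rw [hrest, hg, Function.update_self]
    by_cases h : z i = zi <;> simp [h]
  calc ∑ z : ∀ j, Z j, (if z i = zi then ∏ j, f j (z j) else 0)
      = ∑ z : ∀ j, Z j, ∏ j, g j (z j) := by
        exact (Finset.sum_congr rfl fun z _ => (hgprod z)).symm
    _ = ∏ j, ∑ x, g j x := sum_pi_prod_s2 g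
    _ = (∑ x, g i x) * ∏ j ∈ Finset.univ.erase i, ∑ x, g j x :=
        (Finset.mul_prod_erase Finset.univ (fun j => ∑ x, g j x) (Finset.mem_univ i)).symm
    _ = f i zi * ∏ j ∈ Finset.univ.erase i, ∑ x, f j x := by
        congr 1
        · rw [hg, Function.update_self]; simp
        · refine Finset.prod_congr rfl fun j hj => ?_
          rw [hg, Function.update_of_ne (Finset.ne_of_mem_erase hj)]

end Aux
section Aux2
set_option linter.unusedSectionVars false
variable [Fintype Θ] [∀ i, Fintype (Z i)] [∀ i, DecidableEq (Z i)]

lemma margTheta_eq_zero {q : Θ × (∀ i, Z i) → ℝ} (hq : ∀ x, 0 ≤ q x) {θ : Θ}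
    (h : margTheta q θ = 0) (z : ∀ i, Z i) : q (θ, z) = 0 :=
  le_antisymm (h ▸ le_margTheta hq θ z) (hq _)

lemma margI_eq_zero {q : Θ × (∀ i, Z i) → ℝ} (hq : ∀ x, 0 ≤ q x) {θ : Θ}
    (h : margTheta q θ = 0) (i : Fin N) (zi : Z i) : margI q i θ zi = 0 := by
  have h1 : margI q i θ zi ≤ margTheta q θ := by
    rw [← sum_margI q i θ]
    exact Finset.single_le_sum (fun x _ => margI_nonneg hq i θ x) (Finset.mem_univ zi)
  exact le_antisymm (h ▸ h1) (margI_nonneg hq i θ zi)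

lemma margTheta_branch {q : Θ × (∀ i, Z i) → ℝ} (hq : ∀ x, 0 ≤ q x) (θ : Θ) :
    margTheta (branch q) θ = margTheta q θ := by
  by_cases hM : margTheta q θ = 0
  · rw [hM]
    unfold margTheta
    refine Finset.sum_eq_zero fun z _ => ?_
    rw [branch_eq]
    simpa using Or.inl hM
  · unfold margTheta
    have : ∀ z : ∀ j, Z j, branch q (θ, z)
        = margTheta q θ * ∏ j, (fun x => margI q j θ x / margTheta q θ) (z j) := by
      intro z; rw [branch_eq]
    rw [Finset.sum_congr rfl fun z _ => this z, ← Finset.mul_sum,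
      sum_pi_prod_s2 (fun j x => margI q j θ x / margTheta q θ)]
    have : ∀ j : Fin N, ∑ x, margI q j θ x / margTheta q θ = 1 := by
      intro j
      rw [← Finset.sum_div, sum_margI, div_self hM]
    rw [Finset.prod_congr rfl fun j _ => this j]
    simp [margTheta]

lemma margI_branch {q : Θ × (∀ i, Z i) → ℝ} (hq : ∀ x, 0 ≤ q x) (i : Fin N) (θ : Θ)
    (zi : Z i) : margI (branch q) i θ zi = margI q i θ zi := by
  by_cases hM : margTheta q θ = 0
  · rw [margI_eq_zero hq hM]
    unfold margI
    refine Finset.sum_eq_zero fun z _ => ?_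
    have : branch q (θ, z) = 0 := by rw [branch_eq]; simpa using Or.inl hM
    simp [this]
  · unfold margI
    have h1 : ∀ z : ∀ j, Z j, (if z i = zi then branch q (θ, z) else 0)
        = margTheta q θ *
          (if z i = zi then ∏ j, (fun x => margI q j θ x / margTheta q θ) (z j) else 0) := by
      intro z
      rw [branch_eq]
      split <;> simp
    rw [Finset.sum_congr rfl fun z _ => h1 z, ← Finset.mul_sum,
      sum_pi_prod_ite i zi (fun j x => margI q j θ x / margTheta q θ)]
    have h2 : ∀ j : Fin N, ∑ x, margI q j θ x / margTheta q θ = 1 := by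
      intro j
      rw [← Finset.sum_div, sum_margI, div_self hM]
    rw [Finset.prod_congr rfl fun j hj => h2 j, Finset.prod_const_one, mul_one,
      mul_div_cancel₀ _ hM]
    simp [margI]

end Aux2

section Aux3
set_option linter.unusedSectionVars false
variable [Fintype Θ] [∀ i, Fintype (Z i)] [∀ i, DecidableEq (Z i)]

/-- Sums of separable functions only depend on the marginals. -/
lemma sum_separable (q : Θ × (∀ i, Z i) → ℝ) (φ : Θ → ℝ) (ψ : ∀ i : Fin N, Θ → Z i → ℝ) :
    ∑ x : Θ × (∀ i, Z i), q x * (φ x.1 + ∑ i, ψ i x.1 (x.2 i))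
      = ∑ θ, margTheta q θ * φ θ + ∑ i, ∑ θ, ∑ zi, margI q i θ zi * ψ i θ zi := by
  rw [Fintype.sum_prod_type]
  have step : ∀ θ : Θ, ∑ z : ∀ i, Z i, q (θ, z) * (φ θ + ∑ i, ψ i θ (z i))
      = margTheta q θ * φ θ + ∑ i, ∑ zi, margI q i θ zi * ψ i θ zi := by
    intro θ
    have h1 : ∀ z : ∀ i, Z i, q (θ, z) * (φ θ + ∑ i, ψ i θ (z i))
        = q (θ, z) * φ θ + ∑ i, q (θ, z) * ψ i θ (z i) := by
      intro z; rw [mul_add, Finset.mul_sum]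
    rw [Finset.sum_congr rfl fun z _ => h1 z, Finset.sum_add_distrib]
    congr 1
    · rw [← Finset.sum_mul, margTheta]
    · rw [Finset.sum_comm]
      refine Finset.sum_congr rfl fun i _ => ?_
      have h2 : ∀ zi : Z i, margI q i θ zi * ψ i θ zi
          = ∑ z : ∀ j, Z j, (if z i = zi then q (θ, z) * ψ i θ zi else 0) := by
        intro zi
        rw [margI, Finset.sum_mul]
        refine Finset.sum_congr rfl fun z _ => ?_
        split <;> simp
      rw [Finset.sum_congr rfl fun zi _ => h2 zi, Finset.sum_comm]
      refine Finset.sum_congr rfl fun z _ => ?_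
      rw [Finset.sum_ite_eq univ (z i) (fun zi => q (θ, z) * ψ i θ zi)]
      simp
  rw [Finset.sum_congr rfl fun θ _ => step θ, Finset.sum_add_distrib, Finset.sum_comm]

lemma sum_separable_branch {q : Θ × (∀ i, Z i) → ℝ} (hq : ∀ x, 0 ≤ q x)
    (φ : Θ → ℝ) (ψ : ∀ i : Fin N, Θ → Z i → ℝ) :
    ∑ x : Θ × (∀ i, Z i), branch q x * (φ x.1 + ∑ i, ψ i x.1 (x.2 i))
      = ∑ x : Θ × (∀ i, Z i), q x * (φ x.1 + ∑ i, ψ i x.1 (x.2 i)) := by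
  rw [sum_separable, sum_separable]
  congr 1
  · exact Finset.sum_congr rfl fun θ _ => by rw [margTheta_branch hq]
  · refine Finset.sum_congr rfl fun i _ => Finset.sum_congr rfl fun θ _ =>
      Finset.sum_congr rfl fun zi _ => ?_
    rw [margI_branch hq]

end Aux3

/-- Gibbs' inequality. -/
lemma KL_nonneg {X : Type*} [Fintype X] (q p : X → ℝ) (hq0 : ∀ x, 0 ≤ q x)
    (hp0 : ∀ x, 0 ≤ p x) (hq1 : ∑ x, q x = 1) (hp1 : ∑ x, p x = 1)
    (hac : ∀ x, p x = 0 → q x = 0) : 0 ≤ KL q p := by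
  have key : ∀ x, q x - p x ≤ q x * Real.log (q x / p x) := by
    intro x
    rcases eq_or_lt_of_le (hq0 x) with h | h
    · rw [← h]; simp [hp0 x]
    · have hp : 0 < p x := lt_of_le_of_ne (hp0 x) fun h0 => by
        have := hac x h0.symm; linarith
      have hlog := Real.log_le_sub_one_of_pos (div_pos hp h)
      have : 1 - p x / q x ≤ Real.log (q x / p x) := by
        have : Real.log (q x / p x) = - Real.log (p x / q x) := by
          rw [← Real.log_inv, inv_div]
        rw [this]; linarith
      calc q x - p x = q x * (1 - p x / q x) := by field_simp
        _ ≤ q x * Real.log (q x / p x) := by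
            exact mul_le_mul_of_nonneg_left this (le_of_lt h)
  have := Finset.sum_le_sum (fun x (_ : x ∈ Finset.univ) => key x)
  rw [Finset.sum_sub_distrib, hq1, hp1] at this
  simpa [KL] using this

section Main
set_option linter.unusedSectionVars false
variable [Fintype Θ] [∀ i, Fintype (Z i)] [∀ i, DecidableEq (Z i)]

lemma branch_nonneg {q : Θ × (∀ i, Z i) → ℝ} (hq : ∀ x, 0 ≤ q x) (x : Θ × (∀ i, Z i)) :
    0 ≤ branch q x := by
  rw [branch_eq]
  exact mul_nonneg (margTheta_nonneg hq _)
    (Finset.prod_nonneg fun i _ => div_nonneg (margI_nonneg hq i _ _) (margTheta_nonneg hq _))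

lemma branch_pos {q : Θ × (∀ i, Z i) → ℝ} (hq : ∀ x, 0 ≤ q x) {x : Θ × (∀ i, Z i)}
    (hx : 0 < q x) : 0 < branch q x := by
  have hM : 0 < margTheta q x.1 := lt_of_lt_of_le hx (le_margTheta hq x.1 x.2)
  have hm : ∀ i : Fin N, 0 < margI q i x.1 (x.2 i) := fun i =>
    lt_of_lt_of_le hx (le_margI hq i x.1 x.2)
  rw [branch_eq]
  exact mul_pos hM (Finset.prod_pos fun i _ => div_pos (hm i) hM)

lemma kl_branch_le
    (p₀ : Θ → ℝ) (pc : ∀ i : Fin N, Θ → Z i → ℝ)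
    (hp₀0 : ∀ θ, 0 ≤ p₀ θ) (hpc0 : ∀ i θ zi, 0 ≤ pc i θ zi)
    (p : Θ × (∀ i, Z i) → ℝ)
    (hp : ∀ θ z, p (θ, z) = p₀ θ * ∏ i, pc i θ (z i))
    (q : Θ × (∀ i, Z i) → ℝ)
    (hq0 : ∀ x, 0 ≤ q x) (hq1 : ∑ x, q x = 1) (hqac : ∀ x, p x = 0 → q x = 0)
    (hb1 : ∑ x, branch q x = 1) (hbac : ∀ x, p x = 0 → branch q x = 0) :
    KL (branch q) p ≤ KL q p := by
  set b := branch q with hbdef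
  set F : Θ × (∀ i, Z i) → ℝ :=
    fun x => Real.log (p₀ x.1) + ∑ i, Real.log (pc i x.1 (x.2 i)) with hF
  set G : Θ × (∀ i, Z i) → ℝ :=
    fun x => Real.log (margTheta q x.1) +
      ∑ i, (Real.log (margI q i x.1 (x.2 i)) - Real.log (margTheta q x.1)) with hG
  -- log p = F on the support of p
  have hpF : ∀ x : Θ × (∀ i, Z i), p x ≠ 0 → Real.log (p x) = F x := by
    intro x hx
    obtain ⟨θ, z⟩ := x
    rw [hp θ z] at hx ⊢
    have h1 : p₀ θ ≠ 0 := fun h => hx (by rw [h, zero_mul])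
    have h2 : (∏ i, pc i θ (z i)) ≠ 0 := fun h => hx (by rw [h, mul_zero])
    rw [Real.log_mul h1 h2, Real.log_prod
      (fun i _ => Finset.prod_ne_zero_iff.mp h2 i (Finset.mem_univ i))]
  -- log b = G on the support of b
  have hbG : ∀ x : Θ × (∀ i, Z i), b x ≠ 0 → Real.log (b x) = G x := by
    intro x hx
    rw [hbdef, branch_eq] at hx ⊢
    have h1 : margTheta q x.1 ≠ 0 := fun h => hx (by rw [h, zero_mul])
    have h2 : (∏ i, margI q i x.1 (x.2 i) / margTheta q x.1) ≠ 0 :=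
      fun h => hx (by rw [h, mul_zero])
    rw [Real.log_mul h1 h2, Real.log_prod
      (fun i _ => Finset.prod_ne_zero_iff.mp h2 i (Finset.mem_univ i))]
    congr 1
    refine Finset.sum_congr rfl fun i _ => ?_
    have h3 : margI q i x.1 (x.2 i) ≠ 0 := by
      have := Finset.prod_ne_zero_iff.mp h2 i (Finset.mem_univ i)
      exact fun h => this (by rw [h, zero_div])
    rw [Real.log_div h3 h1]
  have hb0 : ∀ x, 0 ≤ b x := branch_nonneg hq0
  -- KL q p rewritten
  have hKLq : KL q p = ∑ x, q x * Real.log (q x) - ∑ x, q x * F x := by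
    rw [KL, ← Finset.sum_sub_distrib]
    refine Finset.sum_congr rfl fun x _ => ?_
    rcases eq_or_ne (q x) 0 with h | h
    · simp [h]
    · have hpx : p x ≠ 0 := fun h0 => h (hqac x h0)
      rw [Real.log_div h hpx, hpF x hpx, mul_sub]
  have hKLb : KL b p = ∑ x, b x * Real.log (b x) - ∑ x, b x * F x := by
    rw [KL, ← Finset.sum_sub_distrib]
    refine Finset.sum_congr rfl fun x _ => ?_
    rcases eq_or_ne (b x) 0 with h | h
    · simp [h]
    · have hpx : p x ≠ 0 := fun h0 => h (hbac x h0)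
      rw [Real.log_div h hpx, hpF x hpx, mul_sub]
  -- ∑ b F = ∑ q F
  have hFeq : ∑ x, b x * F x = ∑ x, q x * F x := by
    rw [hbdef, hF]
    exact sum_separable_branch hq0 (fun θ => Real.log (p₀ θ))
      (fun i θ zi => Real.log (pc i θ zi))
  -- ∑ b log b = ∑ q log b
  have hGb : ∑ x, b x * Real.log (b x) = ∑ x, b x * G x := by
    refine Finset.sum_congr rfl fun x _ => ?_
    rcases eq_or_ne (b x) 0 with h | h
    · simp [h]
    · rw [hbG x h]
  have hGq : ∑ x, b x * G x = ∑ x, q x * G x := by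
    rw [hbdef, hG]
    exact sum_separable_branch hq0 (fun θ => Real.log (margTheta q θ))
      (fun i θ zi => Real.log (margI q i θ zi) - Real.log (margTheta q θ))
  have hGq2 : ∑ x, q x * G x = ∑ x, q x * Real.log (b x) := by
    refine Finset.sum_congr rfl fun x _ => ?_
    rcases eq_or_ne (q x) 0 with h | h
    · simp [h]
    · have : 0 < b x := branch_pos hq0 (lt_of_le_of_ne (hq0 x) (Ne.symm h))
      rw [hbG x (ne_of_gt this)]
  -- conclude via Gibbs
  have hKLqb : 0 ≤ KL q b := by
    refine KL_nonneg q b hq0 hb0 hq1 hb1 fun x h0 => ?_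
    by_contra h
    exact absurd h0 (ne_of_gt (branch_pos hq0 (lt_of_le_of_ne (hq0 x) (Ne.symm h))))
  have hKLqb2 : KL q b = ∑ x, q x * Real.log (q x) - ∑ x, q x * Real.log (b x) := by
    rw [KL, ← Finset.sum_sub_distrib]
    refine Finset.sum_congr rfl fun x _ => ?_
    rcases eq_or_ne (q x) 0 with h | h
    · simp [h]
    · have hbx : b x ≠ 0 := ne_of_gt (branch_pos hq0 (lt_of_le_of_ne (hq0 x) (Ne.symm h)))
      rw [Real.log_div h hbx, mul_sub]
  have : KL q p - KL b p = KL q b := by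
    rw [hKLq, hKLb, hFeq, hKLqb2, hGb, hGq, hGq2]
    ring
  linarith

end Main

/-- Minimizing KL over a branch family that contains the branchings of the joint
family is at least as good as minimizing over the joint family. -/
theorem branch_family_inf_kl_le [Fintype Θ] [∀ i, Fintype (Z i)] [∀ i, DecidableEq (Z i)]
    -- branched target p(θ,z) = p₀(θ) ∏ i, p_i(z_i | θ)
    (p₀ : Θ → ℝ) (pc : ∀ i : Fin N, Θ → Z i → ℝ)
    (hp₀0 : ∀ θ, 0 ≤ p₀ θ) (hp₀1 : ∑ θ, p₀ θ = 1)
    (hpc0 : ∀ i θ zi, 0 ≤ pc i θ zi) (hpc1 : ∀ i θ, ∑ zi, pc i θ zi = 1)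
    (p : Θ × (∀ i, Z i) → ℝ)
    (hp : ∀ θ z, p (θ, z) = p₀ θ * ∏ i, pc i θ (z i))
    -- the joint family Q and the branch family QB
    (Q QB : Set ((Θ × (∀ i, Z i)) → ℝ))
    (hQne : Q.Nonempty)
    (hQpmf : ∀ q ∈ Q, (∀ x, 0 ≤ q x) ∧ (∑ x, q x = 1) ∧ (∀ x, p x = 0 → q x = 0))
    (hQBpmf : ∀ r ∈ QB, (∀ x, 0 ≤ r x) ∧ (∑ x, r x = 1) ∧ (∀ x, p x = 0 → r x = 0))
    -- every member of QB is of branched form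
    (hQBform : ∀ r ∈ QB, ∃ (g : Θ → ℝ) (c : ∀ i : Fin N, Θ → Z i → ℝ),
        ∀ θ z, r (θ, z) = g θ * ∏ i, c i θ (z i))
    -- the branching of every member of Q lies in QB
    (hbr : ∀ q ∈ Q, branch q ∈ QB) :
    sInf ((fun r => KL r p) '' QB) ≤ sInf ((fun q => KL q p) '' Q) := by
  -- p is a pmf
  have hp0 : ∀ x, 0 ≤ p x := by
    intro ⟨θ, z⟩
    rw [hp θ z]
    exact mul_nonneg (hp₀0 θ) (Finset.prod_nonneg fun i _ => hpc0 i θ (z i))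
  have hp1 : ∑ x, p x = 1 := by
    rw [Fintype.sum_prod_type]
    have : ∀ θ : Θ, ∑ z : ∀ i, Z i, p (θ, z) = p₀ θ := by
      intro θ
      rw [Finset.sum_congr rfl fun z _ => hp θ z, ← Finset.mul_sum,
        sum_pi_prod_s2 (fun i zi => pc i θ zi),
        Finset.prod_congr rfl fun i _ => hpc1 i θ]
      simp
    rw [Finset.sum_congr rfl fun θ _ => this θ, hp₀1]
  -- lower bound for KL over QB
  have hbdd : BddBelow ((fun r => KL r p) '' QB) := by
    refine ⟨0, fun y hy => ?_⟩
    obtain ⟨r, hr, rfl⟩ := hy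
    obtain ⟨hr0, hr1, hrac⟩ := hQBpmf r hr
    exact KL_nonneg r p hr0 hp0 hr1 hp1 hrac
  have hQimne : ((fun q => KL q p) '' Q).Nonempty := hQne.image _
  refine le_csInf hQimne ?_
  rintro y ⟨q, hq, rfl⟩
  obtain ⟨hq0, hq1, hqac⟩ := hQpmf q hq
  obtain ⟨hb0, hb1, hbac⟩ := hQBpmf (branch q) (hbr q hq)
  calc sInf ((fun r => KL r p) '' QB) ≤ KL (branch q) p :=
        csInf_le hbdd ⟨branch q, hbr q hq, rfl⟩
    _ ≤ KL q p := kl_branch_le p₀ pc hp₀0 hpc0 p hp q hq0 hq1 hqac hb1 hbac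
end

section
/- Branching cannot increase KL to a branched target, branch-by-branch: with target p(θ,z) = p₀(θ)∏_i p_i(z_i|θ) and any joint q, the KL gap satisfies KL(q||p) − KL(q^B||p) = E_{θ~q}[ KL(q(z₁,…,z_N|θ) || ∏_i q_i(z_i|θ)) ] ≥ 0, where the inner term is the conditional multi-information (total correlation) of the z_i given θ under q. -/
open Finset

lemma pi_sum_prod {N : ℕ} {Z : Fin N → Type*} [∀ i, Fintype (Z i)]
    (c : ∀ j, Z j → ℝ) (hc : ∀ j, ∑ x, c j x = 1) :
    ∑ z : ∀ j, Z j, ∏ j, c j (z j) = 1 := by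
  rw [← Fintype.piFinset_univ, ← Finset.prod_univ_sum]
  simp [hc]

lemma pi_marg {N : ℕ} {Z : Fin N → Type*} [∀ i, Fintype (Z i)]
    (c : ∀ j, Z j → ℝ) (hc : ∀ j, ∑ x, c j x = 1) (i : Fin N) (f : Z i → ℝ) :
    ∑ z : ∀ j, Z j, (∏ j, c j (z j)) * f (z i) = ∑ x, c i x * f x := by
  have key : ∀ z : ∀ j, Z j, (∏ j, c j (z j)) * f (z i)
      = ∏ j, (c j (z j) * if h : j = i then f (h ▸ z j) else 1) := by
    intro z
    rw [Finset.prod_mul_distrib]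
    congr 1
    rw [Fintype.prod_eq_single i (fun j hj => dif_neg hj)]
    simp
  simp_rw [key]
  rw [← Fintype.piFinset_univ,
    ← Finset.prod_univ_sum (fun _ => univ)
      (fun j (y : Z j) => c j y * if h : j = i then f (h ▸ y) else 1),
    Fintype.prod_eq_single i]
  · simp
  · intro j hj
    simp [dif_neg hj, hc j]

lemma gibbs {α : Type*} [Fintype α] (a b : α → ℝ) (ha : ∀ x, 0 < a x) (hb : ∀ x, 0 < b x)
    (ha1 : ∑ x, a x = 1) (hb1 : ∑ x, b x = 1) :
    0 ≤ ∑ x, a x * Real.log (a x / b x) := by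
  have h2 : ∑ x, a x * Real.log (b x / a x) ≤ 0 := by
    calc ∑ x, a x * Real.log (b x / a x) ≤ ∑ x, (b x - a x) := by
          refine Finset.sum_le_sum fun x _ => ?_
          have hlog := Real.log_le_sub_one_of_pos (div_pos (hb x) (ha x))
          calc a x * Real.log (b x / a x) ≤ a x * (b x / a x - 1) :=
                mul_le_mul_of_nonneg_left hlog (ha x).le
            _ = b x - a x := by
                rw [mul_sub, mul_one, mul_div_cancel₀ _ (ha x).ne']
      _ = 0 := by rw [Finset.sum_sub_distrib, ha1, hb1, sub_self]
  have h3 : ∑ x, a x * Real.log (a x / b x) = -∑ x, a x * Real.log (b x / a x) := by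
    rw [← Finset.sum_neg_distrib]
    refine Finset.sum_congr rfl fun x _ => ?_
    rw [Real.log_div (ha x).ne' (hb x).ne', Real.log_div (hb x).ne' (ha x).ne']
    ring
  linarith

/-- The KL gap between a joint variational distribution and its branching, with
respect to a branched target, equals the expected conditional total correlation
of the local variables given θ, and is therefore nonnegative. -/
theorem kl_gap_eq_conditional_total_correlation {N : ℕ} {Θ : Type*} [Fintype Θ]
    {Z : Fin N → Type*} [∀ i, Fintype (Z i)] [∀ i, DecidableEq (Z i)]
    -- branched target with full support
    (p₀ : Θ → ℝ) (pc : ∀ i : Fin N, Θ → Z i → ℝ)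
    (hp₀0 : ∀ θ, 0 < p₀ θ) (hp₀1 : ∑ θ, p₀ θ = 1)
    (hpc0 : ∀ i θ zi, 0 < pc i θ zi) (hpc1 : ∀ i θ, ∑ zi, pc i θ zi = 1)
    (p : Θ × (∀ i, Z i) → ℝ)
    (hp : ∀ θ z, p (θ, z) = p₀ θ * ∏ i, pc i θ (z i))
    -- joint variational pmf with full support
    (q : Θ × (∀ i, Z i) → ℝ) (hq0 : ∀ x, 0 < q x) (hq1 : ∑ x, q x = 1)
    -- θ-marginal, full conditional, coordinate conditionals, branching
    (qm : Θ → ℝ) (hqm : ∀ θ, qm θ = ∑ z, q (θ, z))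
    (qcond : Θ → (∀ i, Z i) → ℝ) (hqcond : ∀ θ z, qcond θ z = q (θ, z) / qm θ)
    (qc : ∀ i : Fin N, Θ → Z i → ℝ)
    (hqc : ∀ i θ zi, qc i θ zi = (∑ z : ∀ j, Z j, if z i = zi then q (θ, z) else 0) / qm θ)
    (qB : Θ × (∀ i, Z i) → ℝ)
    (hqB : ∀ θ z, qB (θ, z) = qm θ * ∏ i, qc i θ (z i)) :
    (∑ x, q x * Real.log (q x / p x)) - (∑ x, qB x * Real.log (qB x / p x))
        = ∑ θ, qm θ * ∑ z : ∀ i, Z i,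
            qcond θ z * Real.log (qcond θ z / ∏ i, qc i θ (z i))
      ∧ 0 ≤ ∑ θ, qm θ * ∑ z : ∀ i, Z i,
            qcond θ z * Real.log (qcond θ z / ∏ i, qc i θ (z i)) := by
  -- nonemptiness
  have hne : Nonempty (Θ × ∀ i, Z i) := by
    by_contra h
    rw [not_nonempty_iff] at h
    rw [Finset.univ_eq_empty, Finset.sum_empty] at hq1
    norm_num at hq1
  obtain ⟨⟨θ₀, z₀⟩⟩ := hne
  have hneZ : Nonempty (∀ i, Z i) := ⟨z₀⟩
  -- basic positivity and normalization facts
  have hqm0 : ∀ θ, 0 < qm θ := fun θ => by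
    rw [hqm]; exact Finset.sum_pos (fun z _ => hq0 _) univ_nonempty
  have hqcond0 : ∀ θ z, 0 < qcond θ z := fun θ z => by
    rw [hqcond]; exact div_pos (hq0 _) (hqm0 θ)
  have hq_eq : ∀ θ z, q (θ, z) = qm θ * qcond θ z := fun θ z => by
    rw [hqcond, mul_div_cancel₀ _ (hqm0 θ).ne']
  have hqcond1 : ∀ θ, ∑ z, qcond θ z = 1 := fun θ => by
    simp_rw [hqcond]
    rw [← Finset.sum_div, ← hqm, div_self (hqm0 θ).ne']
  have hqc0 : ∀ i θ zi, 0 < qc i θ zi := fun i θ zi => by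
    rw [hqc]
    apply div_pos _ (hqm0 θ)
    refine Finset.sum_pos' (fun z _ => ?_) ⟨Function.update z₀ i zi, mem_univ _, ?_⟩
    · split
      · exact (hq0 _).le
      · exact le_rfl
    · simp [hq0]
  have hqc_marg : ∀ i θ x, qc i θ x = ∑ z : ∀ j, Z j, if z i = x then qcond θ z else 0 := by
    intro i θ x
    rw [hqc, Finset.sum_div]
    refine Finset.sum_congr rfl fun z _ => ?_
    rw [hqcond]
    split <;> simp
  have hqc1 : ∀ i θ, ∑ zi, qc i θ zi = 1 := fun i θ => by
    simp_rw [hqc_marg i θ]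
    rw [Finset.sum_comm]
    simp [hqcond1 θ]
  -- marginal identity for the conditional
  have M1 : ∀ θ (i : Fin N) (f : Z i → ℝ),
      ∑ z : ∀ j, Z j, qcond θ z * f (z i) = ∑ x, qc i θ x * f x := by
    intro θ i f
    calc ∑ z : ∀ j, Z j, qcond θ z * f (z i)
        = ∑ z : ∀ j, Z j, ∑ x, if z i = x then qcond θ z * f x else 0 := by
          refine Finset.sum_congr rfl fun z _ => ?_
          simp
      _ = ∑ x, ∑ z : ∀ j, Z j, if z i = x then qcond θ z * f x else 0 := Finset.sum_comm
      _ = ∑ x, qc i θ x * f x := by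
          refine Finset.sum_congr rfl fun x _ => ?_
          rw [hqc_marg i θ x, Finset.sum_mul]
          refine Finset.sum_congr rfl fun z _ => ?_
          split <;> simp
  -- key per-θ identity
  have key : ∀ θ,
      (∑ z : ∀ i, Z i, q (θ, z) * Real.log (q (θ, z) / p (θ, z)))
        - (∑ z : ∀ i, Z i, qB (θ, z) * Real.log (qB (θ, z) / p (θ, z)))
      = qm θ * ∑ z : ∀ i, Z i,
          qcond θ z * Real.log (qcond θ z / ∏ i, qc i θ (z i)) := by
    intro θ
    have hr1 : ∑ z : ∀ i, Z i, ∏ i, qc i θ (z i) = 1 :=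
      pi_sum_prod (fun j => qc j θ) (fun j => hqc1 j θ)
    have point : ∀ z : ∀ i, Z i,
        q (θ, z) * Real.log (q (θ, z) / p (θ, z))
          - qB (θ, z) * Real.log (qB (θ, z) / p (θ, z))
          - qm θ * (qcond θ z * Real.log (qcond θ z / ∏ i, qc i θ (z i)))
        = qm θ * ((qcond θ z - ∏ i, qc i θ (z i)) * (Real.log (qm θ) - Real.log (p₀ θ))
            + (qcond θ z - ∏ i, qc i θ (z i))
              * ∑ i, (Real.log (qc i θ (z i)) - Real.log (pc i θ (z i)))) := by
      intro z
      have hm := hqm0 θ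
      have hc := hqcond0 θ z
      have hr : (0:ℝ) < ∏ i, qc i θ (z i) := Finset.prod_pos fun i _ => hqc0 i θ (z i)
      have hpp : (0:ℝ) < ∏ i, pc i θ (z i) := Finset.prod_pos fun i _ => hpc0 i θ (z i)
      rw [hq_eq, hqB, hp]
      rw [Real.log_div (mul_pos hm hc).ne' (mul_pos (hp₀0 θ) hpp).ne',
        Real.log_div (mul_pos hm hr).ne' (mul_pos (hp₀0 θ) hpp).ne',
        Real.log_div hc.ne' hr.ne',
        Real.log_mul hm.ne' hc.ne', Real.log_mul hm.ne' hr.ne',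
        Real.log_mul (hp₀0 θ).ne' hpp.ne',
        Real.log_prod (fun i _ => (hqc0 i θ (z i)).ne'),
        Real.log_prod (fun i _ => (hpc0 i θ (z i)).ne'),
        Finset.sum_sub_distrib]
      ring
    have hzero : ∑ z : ∀ i, Z i,
        ((qcond θ z - ∏ i, qc i θ (z i)) * (Real.log (qm θ) - Real.log (p₀ θ))
          + (qcond θ z - ∏ i, qc i θ (z i))
            * ∑ i, (Real.log (qc i θ (z i)) - Real.log (pc i θ (z i)))) = 0 := by
      rw [Finset.sum_add_distrib]
      have h1 : ∑ z : ∀ i, Z i, (qcond θ z - ∏ i, qc i θ (z i))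
          * (Real.log (qm θ) - Real.log (p₀ θ)) = 0 := by
        rw [← Finset.sum_mul, Finset.sum_sub_distrib, hqcond1, hr1, sub_self, zero_mul]
      have h2 : ∑ z : ∀ i, Z i, (qcond θ z - ∏ i, qc i θ (z i))
          * ∑ i, (Real.log (qc i θ (z i)) - Real.log (pc i θ (z i))) = 0 := by
        have expand : ∀ z : ∀ i, Z i, (qcond θ z - ∏ i, qc i θ (z i))
            * ∑ i, (Real.log (qc i θ (z i)) - Real.log (pc i θ (z i)))
            = ∑ i, (qcond θ z * (Real.log (qc i θ (z i)) - Real.log (pc i θ (z i)))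
                - (∏ j, qc j θ (z j)) * (Real.log (qc i θ (z i)) - Real.log (pc i θ (z i)))) := by
          intro z
          rw [Finset.mul_sum]
          exact Finset.sum_congr rfl fun i _ => sub_mul _ _ _
        simp_rw [expand]
        rw [Finset.sum_comm]
        refine Finset.sum_eq_zero fun i _ => ?_
        rw [Finset.sum_sub_distrib,
          M1 θ i (fun x => Real.log (qc i θ x) - Real.log (pc i θ x)),
          pi_marg (fun j => qc j θ) (fun j => hqc1 j θ) i
            (fun x => Real.log (qc i θ x) - Real.log (pc i θ x)),
          sub_self]
      rw [h1, h2, add_zero]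
    have main : ∑ z : ∀ i, Z i,
        (q (θ, z) * Real.log (q (θ, z) / p (θ, z))
          - qB (θ, z) * Real.log (qB (θ, z) / p (θ, z))
          - qm θ * (qcond θ z * Real.log (qcond θ z / ∏ i, qc i θ (z i)))) = 0 := by
      calc ∑ z : ∀ i, Z i, _ = ∑ z : ∀ i, Z i, qm θ *
            ((qcond θ z - ∏ i, qc i θ (z i)) * (Real.log (qm θ) - Real.log (p₀ θ))
              + (qcond θ z - ∏ i, qc i θ (z i))
                * ∑ i, (Real.log (qc i θ (z i)) - Real.log (pc i θ (z i)))) :=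
          Finset.sum_congr rfl fun z _ => point z
        _ = 0 := by rw [← Finset.mul_sum, hzero, mul_zero]
    rw [Finset.sum_sub_distrib, Finset.sum_sub_distrib, ← Finset.mul_sum] at main
    linarith
  constructor
  · rw [Fintype.sum_prod_type, Fintype.sum_prod_type, ← Finset.sum_sub_distrib]
    exact Finset.sum_congr rfl fun θ _ => key θ
  · refine Finset.sum_nonneg fun θ _ => mul_nonneg (hqm0 θ).le ?_
    have hr1 : ∑ z : ∀ i, Z i, ∏ i, qc i θ (z i) = 1 :=
      pi_sum_prod (fun j => qc j θ) (fun j => hqc1 j θ)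
    exact gibbs (qcond θ) (fun z => ∏ i, qc i θ (z i)) (hqcond0 θ)
      (fun z => Finset.prod_pos fun i _ => hqc0 i θ (z i)) (hqcond1 θ) hr1
end
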